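/- arXiv:1408.6589 — 2 statements merged into one kernel-verified Lean document; each statement's English description precedes it below -/
import Mathlib

section
/- The covariance of the two correlated sampling estimators satisfies Cov(ρ_n, ρ'_n) = Σ_{r=1}^{m} ((n−1)^{m−r} / n^m) · Σ_{S ⊆ R∩R', |S| = r} Cov_S(ρ, ρ'), where Cov_S(ρ, ρ') = |Λ(S)|⁻¹ Σ_{l ∈ Λ(S)} (ρ_S(l) − ρ)(ρ'_S(l) − ρ'). -/
open MeasureTheory ProbabilityTheory Finset

noncomputable section

variable {I : Type} [Fintype I] [DecidableEq I]

/-- Block tuples for the relations in `T`: `Π_{j∈T} Fin m_j`. -/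
def Blk (m : I → ℕ) (T : Finset I) : Type := ∀ j : T, Fin (m j)

instance (m : I → ℕ) (T : Finset I) : Fintype (Blk m T) := by unfold Blk; infer_instance
instance (m : I → ℕ) (T : Finset I) : DecidableEq (Blk m T) := by unfold Blk; infer_instance

/-- The mean of `ρ_B` over all block tuples. -/
def blkMean (m : I → ℕ) (T : Finset I) (ρB : Blk m T → ℝ) : ℝ :=
  (Fintype.card (Blk m T) : ℝ)⁻¹ * ∑ b, ρB b

/-- `b` agrees with `l` on the coordinates in `S`. -/
def Agrees (m : I → ℕ) (T S : Finset I) (l : Blk m S) (b : Blk m T) : Prop :=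
  ∀ (j : I) (hjS : j ∈ S) (hjT : j ∈ T), b ⟨j, hjT⟩ = l ⟨j, hjS⟩

instance (m : I → ℕ) (T S : Finset I) (l : Blk m S) :
    DecidablePred (Agrees m T S l) := fun b => by unfold Agrees; infer_instance

/-- `ρ_S(l)`: the average of `ρ_B` over all block tuples agreeing with `l` on `S`. -/
def rhoS (m : I → ℕ) (T : Finset I) (ρB : Blk m T → ℝ) (S : Finset I) (l : Blk m S) : ℝ :=
  ((Finset.univ.filter (Agrees m T S l)).card : ℝ)⁻¹ *
    ∑ b ∈ Finset.univ.filter (Agrees m T S l), ρB b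

/-- `σ_S² = |Λ(S)|⁻¹ Σ_{l∈Λ(S)} (ρ_S(l) − ρ)²`. -/
def sigmaSq (m : I → ℕ) (T : Finset I) (ρB : Blk m T → ℝ) (S : Finset I) : ℝ :=
  (Fintype.card (Blk m S) : ℝ)⁻¹ *
    ∑ l : Blk m S, (rhoS m T ρB S l - blkMean m T ρB) ^ 2

/-- `Cov_S(ρ, ρ') = |Λ(S)|⁻¹ Σ_{l∈Λ(S)} (ρ_S(l) − ρ)(ρ'_S(l) − ρ')`. -/
def covS (m : I → ℕ) (T T' : Finset I) (ρB : Blk m T → ℝ) (ρB' : Blk m T' → ℝ)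
    (S : Finset I) : ℝ :=
  (Fintype.card (Blk m S) : ℝ)⁻¹ *
    ∑ l : Blk m S,
      (rhoS m T ρB S l - blkMean m T ρB) * (rhoS m T' ρB' S l - blkMean m T' ρB')

/-- The sample space `Π_{j∈U} Π_{i=1}^{n} Fin m_j`. -/
def Samp (n : ℕ) (m : I → ℕ) (U : Finset I) : Type := ∀ j : U, Fin n → Fin (m j)

instance (n : ℕ) (m : I → ℕ) (U : Finset I) : Fintype (Samp n m U) := by
  unfold Samp; infer_instance
instance (n : ℕ) (m : I → ℕ) (U : Finset I) : MeasurableSpace (Samp n m U) := ⊤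

/-- The uniform probability measure on the sample space. -/
def unif (n : ℕ) (m : I → ℕ) (U : Finset I) : Measure (Samp n m U) :=
  (Fintype.card (Samp n m U) : ENNReal)⁻¹ • Measure.count

/-- The sampling estimator `ρ_n` for the relations in `T ⊆ U`. -/
def est (n : ℕ) (m : I → ℕ) {U : Finset I} (T : Finset I) (hTU : T ⊆ U)
    (ρB : Blk m T → ℝ) (ω : Samp n m U) : ℝ :=
  ((n : ℝ) ^ T.card)⁻¹ * ∑ i : T → Fin n, ρB fun j => ω ⟨j, hTU j.2⟩ (i j)

/-- Covariance of two real random variables. -/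
def cov {Ω : Type*} [MeasurableSpace Ω] (μ : Measure Ω) (X Y : Ω → ℝ) : ℝ :=
  ∫ ω, (X ω - ∫ x, X x ∂μ) * (Y ω - ∫ x, Y x ∂μ) ∂μ


section AuxLemmas

set_option linter.unusedSectionVars false
set_option linter.unusedVariables false

variable {I : Type} [Fintype I] [DecidableEq I]

lemma card_blk_pos (m : I → ℕ) (hm : ∀ j, 1 ≤ m j) (T : Finset I) :
    0 < Fintype.card (Blk m T) :=
  haveI : Nonempty (Blk m T) := ⟨fun j => ⟨0, hm j⟩⟩
  Fintype.card_pos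

def glue (m : I → ℕ) {S T : Finset I} (hST : S ⊆ T) (l : Blk m S) (c : Blk m (T \ S)) :
    Blk m T :=
  fun j => if h : (j : I) ∈ S then l ⟨j, h⟩ else c ⟨j, Finset.mem_sdiff.2 ⟨j.2, h⟩⟩

def blkSplit (m : I → ℕ) {S T : Finset I} (hST : S ⊆ T) :
    Blk m T ≃ Blk m S × Blk m (T \ S) where
  toFun b := (fun j => b ⟨j, hST j.2⟩, fun j => b ⟨j, (Finset.mem_sdiff.1 j.2).1⟩)
  invFun p := glue m hST p.1 p.2
  left_inv b := by
    funext j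
    by_cases h : (j : I) ∈ S
    · exact dif_pos h
    · exact dif_neg h
  right_inv p := by
    refine Prod.ext ?_ ?_
    · funext j; exact dif_pos j.2
    · funext j; exact dif_neg (Finset.mem_sdiff.1 j.2).2

lemma sum_glue {M : Type*} [AddCommMonoid M] (m : I → ℕ) {S T : Finset I} (hST : S ⊆ T)
    (f : Blk m T → M) :
    ∑ b, f b = ∑ l : Blk m S, ∑ c : Blk m (T \ S), f (glue m hST l c) := by
  have h1 : (∑ p : Blk m S × Blk m (T \ S), f (glue m hST p.1 p.2))
      = ∑ l : Blk m S, ∑ c : Blk m (T \ S), f (glue m hST l c) :=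
    Fintype.sum_prod_type _
  rw [← h1]
  exact Fintype.sum_bijective _ (blkSplit m hST).bijective _ _
    (fun b => congrArg f ((blkSplit m hST).left_inv b).symm)

lemma card_blk_split (m : I → ℕ) {S T : Finset I} (hST : S ⊆ T) :
    Fintype.card (Blk m T) = Fintype.card (Blk m S) * Fintype.card (Blk m (T \ S)) := by
  rw [Fintype.card_congr (blkSplit m hST), Fintype.card_prod]

lemma agrees_glue_iff (m : I → ℕ) {S T : Finset I} (hST : S ⊆ T) (l l' : Blk m S)
    (c : Blk m (T \ S)) : Agrees m T S l (glue m hST l' c) ↔ l' = l := by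
  constructor
  · intro h
    funext j
    have := h j j.2 (hST j.2)
    rwa [show glue m hST l' c ⟨j, hST j.2⟩ = l' j from dif_pos j.2] at this
  · rintro rfl
    intro j hjS hjT
    exact dif_pos hjS

lemma sum_filter_agrees {M : Type*} [AddCommMonoid M] (m : I → ℕ) {S T : Finset I}
    (hST : S ⊆ T) (l : Blk m S) (f : Blk m T → M) :
    ∑ b ∈ Finset.univ.filter (Agrees m T S l), f b
      = ∑ c : Blk m (T \ S), f (glue m hST l c) := by
  rw [Finset.sum_filter, sum_glue m hST]
  rw [Finset.sum_eq_single_of_mem l (Finset.mem_univ l)]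
  · apply Finset.sum_congr rfl
    intro c _
    rw [if_pos ((agrees_glue_iff m hST l l c).2 rfl)]
  · intro l' _ hl'
    apply Finset.sum_eq_zero
    intro c _
    rw [if_neg]
    rw [agrees_glue_iff]
    exact hl'

lemma card_filter_agrees (m : I → ℕ) {S T : Finset I} (hST : S ⊆ T) (l : Blk m S) :
    (Finset.univ.filter (Agrees m T S l)).card = Fintype.card (Blk m (T \ S)) := by
  rw [Finset.card_eq_sum_ones, sum_filter_agrees m hST l (fun _ => 1), Finset.sum_const,
    Finset.card_univ, smul_eq_mul, mul_one]

lemma rhoS_eq (m : I → ℕ) {S T : Finset I} (hST : S ⊆ T) (ρB : Blk m T → ℝ) (l : Blk m S) :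
    rhoS m T ρB S l
      = (Fintype.card (Blk m (T \ S)) : ℝ)⁻¹ * ∑ c, ρB (glue m hST l c) := by
  rw [rhoS, card_filter_agrees m hST, sum_filter_agrees m hST]

lemma avg_rhoS (m : I → ℕ) (hm : ∀ j, 1 ≤ m j) {S T : Finset I} (hST : S ⊆ T)
    (ρB : Blk m T → ℝ) :
    (Fintype.card (Blk m S) : ℝ)⁻¹ * ∑ l, rhoS m T ρB S l = blkMean m T ρB := by
  have h1 : (0:ℝ) < Fintype.card (Blk m S) := by exact_mod_cast card_blk_pos m hm S
  have h2 : (0:ℝ) < Fintype.card (Blk m (T \ S)) := by exact_mod_cast card_blk_pos m hm _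
  simp_rw [rhoS_eq m hST]
  rw [← Finset.mul_sum, ← sum_glue m hST ρB, blkMean, card_blk_split m hST]
  push_cast
  rw [mul_inv]
  ring

lemma proj_avg {A : Type} [Fintype A] [DecidableEq A] {β : A → Type} [∀ a, Fintype (β a)]
    [∀ a, Nonempty (β a)] {γ : Type} [Fintype γ] [DecidableEq γ]
    (σ : γ → A) (hσ : Function.Injective σ) (F : (∀ g, β (σ g)) → ℝ) :
    (Fintype.card (∀ a, β a) : ℝ)⁻¹ * ∑ ω : ∀ a, β a, F (fun g => ω (σ g))
      = (Fintype.card (∀ g, β (σ g)) : ℝ)⁻¹ * ∑ v, F v := by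
  classical
  set W := ∀ a : {a : A // a ∉ Set.range σ}, β a.1 with hW
  set Φ : (∀ a, β a) → (∀ g, β (σ g)) × W :=
    fun ω => (fun g => ω (σ g), fun a => ω a.1) with hΦ
  have hbij : Function.Bijective Φ := by
    constructor
    · intro ω ω' h
      funext a
      by_cases ha : a ∈ Set.range σ
      · obtain ⟨g, rfl⟩ := ha
        exact congrFun (congrArg Prod.fst h) g
      · exact congrFun (congrArg Prod.snd h) ⟨a, ha⟩
    · rintro ⟨v, w⟩
      refine ⟨fun a => if h : a ∈ Set.range σ then cast (congrArg β h.choose_spec) (v h.choose)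
        else w ⟨a, h⟩, ?_⟩
      refine Prod.ext ?_ ?_
      · funext g
        have h : σ g ∈ Set.range σ := ⟨g, rfl⟩
        show (if h : σ g ∈ Set.range σ then _ else _) = v g
        rw [dif_pos h]
        have key : ∀ (c : γ) (hc : σ c = σ g), cast (congrArg β hc) (v c) = v g := by
          intro c hc
          have hcg : c = g := hσ hc
          subst hcg
          exact cast_eq_iff_heq.2 HEq.rfl
        exact key h.choose h.choose_spec
      · funext a
        show (if h : a.1 ∈ Set.range σ then _ else _) = w a
        rw [dif_neg a.2]
  have hcard : Fintype.card (∀ a, β a)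
      = Fintype.card (∀ g, β (σ g)) * Fintype.card W := by
    rw [Fintype.card_congr (Equiv.ofBijective Φ hbij), Fintype.card_prod]
  have hsum : ∑ ω : ∀ a, β a, F (fun g => ω (σ g))
      = (Fintype.card W : ℝ) * ∑ v, F v := by
    have h2 : ∑ ω : ∀ a, β a, F (fun g => ω (σ g))
        = ∑ p : (∀ g, β (σ g)) × W, F p.1 :=
      Fintype.sum_bijective Φ hbij _ _ (fun ω => rfl)
    rw [h2, Fintype.sum_prod_type]
    simp only [Finset.sum_const, Finset.card_univ, nsmul_eq_mul]
    rw [← Finset.mul_sum]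
  have hWpos : (0:ℝ) < Fintype.card W := by exact_mod_cast Fintype.card_pos
  have hVpos : (0:ℝ) < Fintype.card (∀ g, β (σ g)) := by exact_mod_cast Fintype.card_pos
  rw [hsum, hcard]
  push_cast
  rw [mul_inv]
  field_simp

def sampCurry (n : ℕ) (m : I → ℕ) (U : Finset I) :
    (∀ p : {j // j ∈ U} × Fin n, Fin (m p.1)) → Samp n m U := fun f j t => f (j, t)

lemma sampCurry_bijective (n : ℕ) (m : I → ℕ) (U : Finset I) :
    Function.Bijective (sampCurry n m U) := by
  constructor
  · intro f f' h
    funext p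
    exact congrFun (congrFun h p.1) p.2
  · intro ω
    exact ⟨fun p => ω p.1 p.2, rfl⟩

lemma samp_proj_avg (n : ℕ) (m : I → ℕ) (hm : ∀ j, 1 ≤ m j) (U : Finset I)
    {γ : Type} [Fintype γ] [DecidableEq γ]
    (σ : γ → {j // j ∈ U} × Fin n) (hσ : Function.Injective σ)
    (F : (∀ g, Fin (m (σ g).1)) → ℝ) :
    (Fintype.card (Samp n m U) : ℝ)⁻¹ * ∑ ω : Samp n m U, F (fun g => ω (σ g).1 (σ g).2)
      = (Fintype.card (∀ g, Fin (m ((σ g).1 : I))) : ℝ)⁻¹ * ∑ v, F v := by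
  haveI : ∀ p : {j // j ∈ U} × Fin n, Nonempty (Fin (m p.1)) := fun p => ⟨⟨0, hm _⟩⟩
  have hcard : Fintype.card (Samp n m U)
      = Fintype.card (∀ p : {j // j ∈ U} × Fin n, Fin (m p.1)) :=
    (Fintype.card_of_bijective (sampCurry_bijective n m U)).symm
  have hsum : ∑ ω : Samp n m U, F (fun g => ω (σ g).1 (σ g).2)
      = ∑ f : ∀ p : {j // j ∈ U} × Fin n, Fin (m p.1), F (fun g => f (σ g)) :=
    (Fintype.sum_bijective (sampCurry n m U) (sampCurry_bijective n m U) _ _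
      (fun f => rfl)).symm
  rw [hcard, hsum]
  exact proj_avg (β := fun p : {j // j ∈ U} × Fin n => Fin (m p.1)) σ hσ F

lemma single_expect (n : ℕ) (m : I → ℕ) (hm : ∀ j, 1 ≤ m j) {U : Finset I}
    (T : Finset I) (hTU : T ⊆ U) (ρB : Blk m T → ℝ) (i : {j // j ∈ T} → Fin n) :
    (Fintype.card (Samp n m U) : ℝ)⁻¹ *
        ∑ ω : Samp n m U, ρB (fun j => ω ⟨j, hTU j.2⟩ (i j))
      = blkMean m T ρB := by
  have h := samp_proj_avg n m hm U (γ := {j // j ∈ T})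
    (fun j => (⟨j.1, hTU j.2⟩, i j))
    (fun j k hjk => Subtype.ext (congrArg (fun p => p.1.1) hjk)) ρB
  rw [blkMean]
  exact h

/-- The set of coincidence coordinates of the index pair `(i, i')`. -/
def pairS {n : ℕ} (R R' : Finset I) (i : {j // j ∈ R} → Fin n) (i' : {j // j ∈ R'} → Fin n) :
    Finset I :=
  (R ∩ R').filter (fun j => ∀ (h : j ∈ R) (h' : j ∈ R'), i ⟨j, h⟩ = i' ⟨j, h'⟩)

lemma pairS_subset {n : ℕ} (R R' : Finset I) (i : {j // j ∈ R} → Fin n)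
    (i' : {j // j ∈ R'} → Fin n) : pairS R R' i i' ⊆ R ∩ R' := Finset.filter_subset _ _

def pairSig {n : ℕ} (R R' : Finset I) (i : {j // j ∈ R} → Fin n) (i' : {j // j ∈ R'} → Fin n) :
    ({j // j ∈ R} ⊕ {j // j ∈ R' \ pairS R R' i i'}) → {j // j ∈ R ∪ R'} × Fin n
  | .inl j => (⟨j.1, Finset.subset_union_left j.2⟩, i j)
  | .inr j => (⟨j.1, Finset.subset_union_right (Finset.mem_sdiff.1 j.2).1⟩,
      i' ⟨j.1, (Finset.mem_sdiff.1 j.2).1⟩)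

lemma pairSig_injective {n : ℕ} (R R' : Finset I) (i : {j // j ∈ R} → Fin n)
    (i' : {j // j ∈ R'} → Fin n) : Function.Injective (pairSig R R' i i') := by
  have key : ∀ (j : {j // j ∈ R}) (k : {j // j ∈ R' \ pairS R R' i i'}),
      pairSig R R' i i' (.inl j) ≠ pairSig R R' i i' (.inr k) := by
    intro j k h
    have h1 : j.1 = k.1 := congrArg (fun p => p.1.1) h
    have h2 : i j = i' ⟨k.1, (Finset.mem_sdiff.1 k.2).1⟩ := congrArg Prod.snd h
    apply (Finset.mem_sdiff.1 k.2).2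
    refine Finset.mem_filter.2 ⟨Finset.mem_inter.2 ⟨h1 ▸ j.2, (Finset.mem_sdiff.1 k.2).1⟩,
      fun hR hR' => ?_⟩
    have h3 : i ⟨k.1, hR⟩ = i j := by
      obtain ⟨jv, jp⟩ := j
      cases h1
      rfl
    rw [h3, h2]
  rintro (j | j) (k | k) h
  · exact congrArg Sum.inl (Subtype.ext (congrArg (fun p => p.1.1) h))
  · exact absurd h (key j k)
  · exact absurd h.symm (key k j)
  · exact congrArg Sum.inr (Subtype.ext (congrArg (fun p => p.1.1) h))

def pairF (m : I → ℕ) {n : ℕ} (R R' : Finset I) (i : {j // j ∈ R} → Fin n)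
    (i' : {j // j ∈ R'} → Fin n) (ρB : Blk m R → ℝ) (ρB' : Blk m R' → ℝ)
    (v : ∀ g, Fin (m ((pairSig R R' i i' g).1 : I))) : ℝ :=
  (ρB fun j => v (Sum.inl j)) *
  (ρB' fun j => if h : (j : I) ∈ pairS R R' i i' then
      v (Sum.inl ⟨j.1, ((pairS_subset R R' i i').trans Finset.inter_subset_left) h⟩)
    else v (Sum.inr ⟨j.1, Finset.mem_sdiff.2 ⟨j.2, h⟩⟩))

def pairPsi (m : I → ℕ) {n : ℕ} (R R' : Finset I) (i : {j // j ∈ R} → Fin n)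
    (i' : {j // j ∈ R'} → Fin n)
    (p : Blk m R × Blk m (R' \ pairS R R' i i')) (g : _) :
    Fin (m ((pairSig R R' i i' g).1 : I)) :=
  match g with
  | .inl j => p.1 j
  | .inr j => p.2 j

lemma pairPsi_bijective (m : I → ℕ) {n : ℕ} (R R' : Finset I) (i : {j // j ∈ R} → Fin n)
    (i' : {j // j ∈ R'} → Fin n) : Function.Bijective (pairPsi m R R' i i') := by
  constructor
  · intro p q h
    refine Prod.ext ?_ ?_
    · funext j; exact congrFun h (Sum.inl j)
    · funext j; exact congrFun h (Sum.inr j)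
  · intro v
    refine ⟨(fun j => v (Sum.inl j), fun j => v (Sum.inr j)), ?_⟩
    funext g
    cases g <;> rfl

lemma pair_expect (n : ℕ) (m : I → ℕ) (hm : ∀ j, 1 ≤ m j)
    (R R' : Finset I) (ρB : Blk m R → ℝ) (ρB' : Blk m R' → ℝ)
    (i : {j // j ∈ R} → Fin n) (i' : {j // j ∈ R'} → Fin n) :
    (Fintype.card (Samp n m (R ∪ R')) : ℝ)⁻¹ *
        ∑ ω : Samp n m (R ∪ R'),
          (ρB fun j => ω ⟨j, Finset.subset_union_left j.2⟩ (i j)) *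
          (ρB' fun j => ω ⟨j, Finset.subset_union_right j.2⟩ (i' j))
      = (Fintype.card (Blk m (pairS R R' i i')) : ℝ)⁻¹ *
          ∑ l, rhoS m R ρB (pairS R R' i i') l * rhoS m R' ρB' (pairS R R' i i') l := by
  classical
  have hSRR' : pairS R R' i i' ⊆ R ∩ R' := pairS_subset R R' i i'
  have hSR : pairS R R' i i' ⊆ R := hSRR'.trans Finset.inter_subset_left
  have hSR' : pairS R R' i i' ⊆ R' := hSRR'.trans Finset.inter_subset_right
  have key := samp_proj_avg n m hm (R ∪ R') (pairSig R R' i i')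
    (pairSig_injective R R' i i') (pairF m R R' i i' ρB ρB')
  have hL : ∀ ω : Samp n m (R ∪ R'),
      pairF m R R' i i' ρB ρB' (fun g => ω (pairSig R R' i i' g).1 (pairSig R R' i i' g).2)
      = (ρB fun j => ω ⟨j, Finset.subset_union_left j.2⟩ (i j)) *
        (ρB' fun j => ω ⟨j, Finset.subset_union_right j.2⟩ (i' j)) := by
    intro ω
    unfold pairF
    congr 1
    congr 1
    funext j
    by_cases h : (j : I) ∈ pairS R R' i i'
    · refine (dif_pos h).trans ?_
      have hii : i ⟨j.1, hSR h⟩ = i' j := by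
        have := (Finset.mem_filter.1 h).2 (hSR h) j.2
        exact this
      show ω ⟨j.1, Finset.subset_union_left (hSR h)⟩ (i ⟨j.1, hSR h⟩) = _
      rw [hii]
    · refine (dif_neg h).trans ?_
      rfl
  simp_rw [hL] at key
  rw [key]
  have hsplit : (∑ v, pairF m R R' i i' ρB ρB' v)
      = ∑ p : Blk m R × Blk m (R' \ pairS R R' i i'),
          pairF m R R' i i' ρB ρB' (pairPsi m R R' i i' p) :=
    (Fintype.sum_bijective _ (pairPsi_bijective m R R' i i') _ _ (fun p => rfl)).symm
  have hcardV : Fintype.card (∀ g, Fin (m ((pairSig R R' i i' g).1 : I)))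
      = Fintype.card (Blk m R) * Fintype.card (Blk m (R' \ pairS R R' i i')) := by
    rw [← Fintype.card_prod]
    exact (Fintype.card_of_bijective (pairPsi_bijective m R R' i i')).symm
  have hFΨ : ∀ p : Blk m R × Blk m (R' \ pairS R R' i i'),
      pairF m R R' i i' ρB ρB' (pairPsi m R R' i i' p)
      = ρB p.1 * ρB' (glue m hSR' (fun j => p.1 ⟨j.1, hSR j.2⟩) p.2) := fun p => rfl
  rw [hsplit, hcardV]
  have hprod : (∑ p : Blk m R × Blk m (R' \ pairS R R' i i'),
      pairF m R R' i i' ρB ρB' (pairPsi m R R' i i' p))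
      = ∑ u : Blk m R, ∑ w : Blk m (R' \ pairS R R' i i'),
          ρB u * ρB' (glue m hSR' (fun j => u ⟨j.1, hSR j.2⟩) w) := by
    simp_rw [hFΨ]
    exact Fintype.sum_prod_type _
  rw [hprod, sum_glue m hSR (f := fun u => ∑ w, ρB u *
    ρB' (glue m hSR' (fun j => u ⟨j.1, hSR j.2⟩) w))]
  have hres : ∀ (l : Blk m (pairS R R' i i')) (c : Blk m (R \ pairS R R' i i')),
      (fun j : {j // j ∈ pairS R R' i i'} => glue m hSR l c ⟨j.1, hSR j.2⟩) = l := by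
    intro l c
    funext j
    exact dif_pos j.2
  simp_rw [hres]
  simp_rw [rhoS_eq m hSR ρB, rhoS_eq m hSR' ρB']
  have hc1 : (0:ℝ) < Fintype.card (Blk m (R \ pairS R R' i i')) := by
    exact_mod_cast card_blk_pos m hm _
  have hc2 : (0:ℝ) < Fintype.card (Blk m (R' \ pairS R R' i i')) := by
    exact_mod_cast card_blk_pos m hm _
  have hrw : ∀ l : Blk m (pairS R R' i i'),
      ((Fintype.card (Blk m (R \ pairS R R' i i')) : ℝ)⁻¹ *
          ∑ c, ρB (glue m hSR l c)) *
        ((Fintype.card (Blk m (R' \ pairS R R' i i')) : ℝ)⁻¹ *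
          ∑ w, ρB' (glue m hSR' l w))
      = (Fintype.card (Blk m (R \ pairS R R' i i')) : ℝ)⁻¹ *
        (Fintype.card (Blk m (R' \ pairS R R' i i')) : ℝ)⁻¹ *
        ((∑ c, ρB (glue m hSR l c)) * ∑ w, ρB' (glue m hSR' l w)) := fun l => by ring
  simp_rw [hrw]
  rw [← Finset.mul_sum]
  have hinner : ∀ l : Blk m (pairS R R' i i'),
      ∑ c : Blk m (R \ pairS R R' i i'), ∑ w : Blk m (R' \ pairS R R' i i'),
        ρB (glue m hSR l c) * ρB' (glue m hSR' l w)
      = (∑ c, ρB (glue m hSR l c)) * ∑ w, ρB' (glue m hSR' l w) := by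
    intro l
    rw [Finset.sum_mul_sum]
  simp_rw [hinner]
  rw [card_blk_split m hSR]
  push_cast
  rw [mul_inv, mul_inv]
  ring

instance sampMSC (n : ℕ) (m : I → ℕ) (U : Finset I) :
    MeasurableSingletonClass (Samp n m U) :=
  ⟨fun _ => MeasurableSpace.measurableSet_top⟩

lemma integral_unif (n : ℕ) (m : I → ℕ) (U : Finset I) (f : Samp n m U → ℝ) :
    ∫ ω, f ω ∂(unif n m U) = (Fintype.card (Samp n m U) : ℝ)⁻¹ * ∑ ω, f ω := by
  rw [unif, integral_smul_measure,
    MeasureTheory.integral_fintype _]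
  simp [Measure.real, Measure.count_singleton, ENNReal.toReal_inv, smul_eq_mul]
  exact Integrable.of_finite

lemma samp_card_pos (n : ℕ) (m : I → ℕ) (hm : ∀ j, 1 ≤ m j) (U : Finset I) :
    0 < Fintype.card (Samp n m U) :=
  haveI : Nonempty (Samp n m U) := ⟨fun j _ => ⟨0, hm j⟩⟩
  Fintype.card_pos

lemma aux_cov_alg (c sxy sx sy : ℝ) (hc : c ≠ 0) :
    c⁻¹ * (sxy - c⁻¹ * sy * sx - c⁻¹ * sx * sy + c * (c⁻¹ * sx * (c⁻¹ * sy)))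
      = c⁻¹ * sxy - c⁻¹ * sx * (c⁻¹ * sy) := by
  field_simp
  ring

lemma cov_unif (n : ℕ) (m : I → ℕ) (hm : ∀ j, 1 ≤ m j) (U : Finset I)
    (X Y : Samp n m U → ℝ) :
    cov (unif n m U) X Y
      = (Fintype.card (Samp n m U) : ℝ)⁻¹ * (∑ ω, X ω * Y ω)
        - ((Fintype.card (Samp n m U) : ℝ)⁻¹ * ∑ ω, X ω)
          * ((Fintype.card (Samp n m U) : ℝ)⁻¹ * ∑ ω, Y ω) := by
  have hc : (0:ℝ) < Fintype.card (Samp n m U) := by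
    exact_mod_cast samp_card_pos n m hm U
  rw [cov, integral_unif, integral_unif, integral_unif]
  set c : ℝ := (Fintype.card (Samp n m U) : ℝ) with hcdef
  set EX : ℝ := c⁻¹ * ∑ ω, X ω
  set EY : ℝ := c⁻¹ * ∑ ω, Y ω
  have hexp : ∀ ω, (X ω - EX) * (Y ω - EY)
      = X ω * Y ω - EY * X ω - EX * Y ω + EX * EY := fun ω => by ring
  simp_rw [hexp]
  rw [Finset.sum_add_distrib, Finset.sum_sub_distrib, Finset.sum_sub_distrib,
    ← Finset.mul_sum, ← Finset.mul_sum, Finset.sum_const, Finset.card_univ,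
    nsmul_eq_mul]
  have hcard : (Fintype.card (Samp n m U) : ℝ) = c := rfl
  rw [hcard]
  exact aux_cov_alg c _ _ _ hc.ne'

lemma avg_cov_alg {α : Type} [Fintype α] (a b : α → ℝ) (A B : ℝ)
    (hc : 0 < Fintype.card α)
    (hA : (Fintype.card α : ℝ)⁻¹ * ∑ x, a x = A)
    (hB : (Fintype.card α : ℝ)⁻¹ * ∑ x, b x = B) :
    (Fintype.card α : ℝ)⁻¹ * ∑ x, (a x - A) * (b x - B)
      = (Fintype.card α : ℝ)⁻¹ * (∑ x, a x * b x) - A * B := by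
  have hc' : (0:ℝ) < (Fintype.card α : ℝ) := by exact_mod_cast hc
  rw [← hA, ← hB]
  set c : ℝ := (Fintype.card α : ℝ) with hcdef
  set EX : ℝ := c⁻¹ * ∑ x, a x
  set EY : ℝ := c⁻¹ * ∑ x, b x
  have hexp : ∀ x, (a x - EX) * (b x - EY)
      = a x * b x - EY * a x - EX * b x + EX * EY := fun x => by ring
  simp_rw [hexp]
  rw [Finset.sum_add_distrib, Finset.sum_sub_distrib, Finset.sum_sub_distrib,
    ← Finset.mul_sum, ← Finset.mul_sum, Finset.sum_const, Finset.card_univ,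
    nsmul_eq_mul]
  have hcard : (Fintype.card α : ℝ) = c := rfl
  rw [hcard]
  exact aux_cov_alg c _ _ _ hc'.ne'

lemma covS_eq (m : I → ℕ) (hm : ∀ j, 1 ≤ m j) (R R' : Finset I)
    (ρB : Blk m R → ℝ) (ρB' : Blk m R' → ℝ) {S : Finset I} (hS : S ⊆ R ∩ R') :
    covS m R R' ρB ρB' S
      = (Fintype.card (Blk m S) : ℝ)⁻¹ *
          (∑ l, rhoS m R ρB S l * rhoS m R' ρB' S l)
        - blkMean m R ρB * blkMean m R' ρB' := by
  rw [covS]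
  exact avg_cov_alg _ _ _ _ (card_blk_pos m hm S)
    (avg_rhoS m hm (hS.trans Finset.inter_subset_left) ρB)
    (avg_rhoS m hm (hS.trans Finset.inter_subset_right) ρB')

lemma rhoS_empty (m : I → ℕ) (T : Finset I) (ρB : Blk m T → ℝ) (l : Blk m ∅) :
    rhoS m T ρB ∅ l = blkMean m T ρB := by
  have h : Finset.univ.filter (Agrees m T ∅ l) = Finset.univ := by
    apply Finset.filter_true_of_mem
    intro b _
    intro j hj _
    exact absurd hj (Finset.notMem_empty j)
  rw [rhoS, h, Finset.card_univ, blkMean]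

lemma covS_empty (m : I → ℕ) (R R' : Finset I) (ρB : Blk m R → ℝ) (ρB' : Blk m R' → ℝ) :
    covS m R R' ρB ρB' (∅ : Finset I) = 0 := by
  rw [covS]
  have h : ∀ l ∈ (Finset.univ : Finset (Blk m (∅ : Finset I))),
      (rhoS m R ρB ∅ l - blkMean m R ρB) * (rhoS m R' ρB' ∅ l - blkMean m R' ρB') = 0 := by
    intro l _
    rw [rhoS_empty, sub_self, zero_mul]
  rw [Finset.sum_eq_zero h, mul_zero]

def pairQ {n : ℕ} (R R' S : Finset I) (i : {j // j ∈ R} → Fin n)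
    (j : {j // j ∈ R'}) (x : Fin n) : Prop :=
  if h : (j : I) ∈ R then (if (j : I) ∈ S then x = i ⟨j.1, h⟩ else x ≠ i ⟨j.1, h⟩) else True

instance {n : ℕ} (R R' S : Finset I) (i : {j // j ∈ R} → Fin n)
    (j : {j // j ∈ R'}) (x : Fin n) : Decidable (pairQ R R' S i j x) := by
  unfold pairQ; infer_instance

lemma pairS_eq_iff {n : ℕ} (R R' S : Finset I) (hS : S ⊆ R ∩ R')
    (i : {j // j ∈ R} → Fin n) (i' : {j // j ∈ R'} → Fin n) :
    pairS R R' i i' = S ↔ ∀ j : {j // j ∈ R'}, pairQ R R' S i j (i' j) := by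
  constructor
  · intro h j
    unfold pairQ
    split_ifs with hR hjS
    · have hmem : (j : I) ∈ pairS R R' i i' := h ▸ hjS
      exact ((Finset.mem_filter.1 hmem).2 hR j.2).symm
    · intro hx
      apply hjS
      rw [← h]
      exact Finset.mem_filter.2 ⟨Finset.mem_inter.2 ⟨hR, j.2⟩, fun h1 h2 => hx.symm⟩
  · intro h
    apply Finset.ext
    intro a
    constructor
    · intro ha
      have haRR' : a ∈ R ∩ R' := pairS_subset R R' i i' ha
      have haR : a ∈ R := (Finset.mem_inter.1 haRR').1
      have haR' : a ∈ R' := (Finset.mem_inter.1 haRR').2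
      have hq := h ⟨a, haR'⟩
      unfold pairQ at hq
      rw [dif_pos haR] at hq
      by_contra haS
      rw [if_neg haS] at hq
      exact hq ((Finset.mem_filter.1 ha).2 haR haR').symm
    · intro haS
      have haRR' : a ∈ R ∩ R' := hS haS
      have haR : a ∈ R := (Finset.mem_inter.1 haRR').1
      have haR' : a ∈ R' := (Finset.mem_inter.1 haRR').2
      have hq := h ⟨a, haR'⟩
      unfold pairQ at hq
      rw [dif_pos haR, if_pos haS] at hq
      exact Finset.mem_filter.2 ⟨haRR', fun h1 h2 => hq.symm⟩

lemma card_pairQ {n : ℕ} (R R' S : Finset I) (hS : S ⊆ R ∩ R')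
    (i : {j // j ∈ R} → Fin n) (j : {j // j ∈ R'}) :
    Fintype.card {x : Fin n // pairQ R R' S i j x}
      = if (j : I) ∈ S then 1 else if (j : I) ∈ R ∩ R' then n - 1 else n := by
  by_cases hR : (j : I) ∈ R
  · by_cases hjS : (j : I) ∈ S
    · rw [if_pos hjS]
      have he : ∀ x : Fin n, pairQ R R' S i j x ↔ x = i ⟨j.1, hR⟩ := by
        intro x; unfold pairQ; rw [dif_pos hR, if_pos hjS]
      rw [Fintype.card_congr (Equiv.subtypeEquivRight he)]
      exact Fintype.card_subtype_eq _
    · rw [if_neg hjS, if_pos (Finset.mem_inter.2 ⟨hR, j.2⟩)]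
      have he : ∀ x : Fin n, pairQ R R' S i j x ↔ ¬ (x = i ⟨j.1, hR⟩) := by
        intro x; unfold pairQ; rw [dif_pos hR, if_neg hjS]
      rw [Fintype.card_congr (Equiv.subtypeEquivRight he), Fintype.card_subtype_compl,
        Fintype.card_subtype_eq, Fintype.card_fin]
  · have hjS : (j : I) ∉ S := fun h => hR (Finset.mem_inter.1 (hS h)).1
    have hjRR' : (j : I) ∉ R ∩ R' := fun h => hR (Finset.mem_inter.1 h).1
    rw [if_neg hjS, if_neg hjRR']
    have he : ∀ x : Fin n, pairQ R R' S i j x ↔ True := by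
      intro x; unfold pairQ; rw [dif_neg hR]
    rw [Fintype.card_congr (Equiv.subtypeEquivRight he)]
    rw [Fintype.card_congr (Equiv.subtypeUnivEquiv (fun x : Fin n => trivial))]
    exact Fintype.card_fin n

lemma count_fiber {n : ℕ} (R R' S : Finset I) (hS : S ⊆ R ∩ R')
    (i : {j // j ∈ R} → Fin n) :
    (Finset.univ.filter (fun i' : {j // j ∈ R'} → Fin n => pairS R R' i i' = S)).card
      = (n - 1) ^ ((R ∩ R').card - S.card) * n ^ (R'.card - (R ∩ R').card) := by
  classical
  have h1 : (Finset.univ.filter (fun i' : {j // j ∈ R'} → Fin n => pairS R R' i i' = S))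
      = Finset.univ.filter (fun i' => ∀ j : {j // j ∈ R'}, pairQ R R' S i j (i' j)) := by
    apply Finset.filter_congr
    intro i' _
    exact pairS_eq_iff R R' S hS i i'
  rw [h1, ← Fintype.card_subtype,
    Fintype.card_congr (Equiv.subtypePiEquivPi (p := fun j x => pairQ R R' S i j x)),
    Fintype.card_pi]
  have h2 : ∀ j : {j // j ∈ R'}, Fintype.card {x : Fin n // pairQ R R' S i j x}
      = (fun a => if a ∈ S then 1 else if a ∈ R ∩ R' then n - 1 else n) (j : I) :=
    fun j => card_pairQ R R' S hS i j
  rw [Finset.prod_congr rfl (fun j _ => h2 j), Finset.prod_coe_sort R'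
    (fun a => if a ∈ S then 1 else if a ∈ R ∩ R' then n - 1 else n)]
  rw [← Finset.prod_sdiff (Finset.inter_subset_right (s₁ := R) (s₂ := R')),
    ← Finset.prod_sdiff hS]
  have hA : ∀ j ∈ R' \ (R ∩ R'),
      (if j ∈ S then 1 else if j ∈ R ∩ R' then n - 1 else n) = n := by
    intro j hj
    have h2 : j ∉ R ∩ R' := (Finset.mem_sdiff.1 hj).2
    have h3 : j ∉ S := fun hs => h2 (hS hs)
    rw [if_neg h3, if_neg h2]
  have hB : ∀ j ∈ (R ∩ R') \ S,
      (if j ∈ S then 1 else if j ∈ R ∩ R' then n - 1 else n) = n - 1 := by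
    intro j hj
    rw [if_neg (Finset.mem_sdiff.1 hj).2, if_pos (Finset.mem_sdiff.1 hj).1]
  have hC : ∀ j ∈ S, (if j ∈ S then 1 else if j ∈ R ∩ R' then n - 1 else n) = 1 :=
    fun j hj => if_pos hj
  rw [Finset.prod_congr rfl hA, Finset.prod_congr rfl hB, Finset.prod_congr rfl hC,
    Finset.prod_const, Finset.prod_const, Finset.prod_const_one,
    Finset.card_sdiff_of_subset Finset.inter_subset_right, Finset.card_sdiff_of_subset hS]
  ring

lemma count_pairs {n : ℕ} (R R' S : Finset I) (hS : S ⊆ R ∩ R') :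
    (Finset.univ.filter
        (fun p : ({j // j ∈ R} → Fin n) × ({j // j ∈ R'} → Fin n) =>
          pairS R R' p.1 p.2 = S)).card
      = n ^ R.card * ((n - 1) ^ ((R ∩ R').card - S.card) * n ^ (R'.card - (R ∩ R').card)) := by
  classical
  rw [Finset.card_filter, Fintype.sum_prod_type]
  have hinner : ∀ i : {j // j ∈ R} → Fin n,
      (∑ i' : {j // j ∈ R'} → Fin n, if pairS R R' i i' = S then 1 else 0)
      = (n - 1) ^ ((R ∩ R').card - S.card) * n ^ (R'.card - (R ∩ R').card) := by
    intro i
    rw [← Finset.card_filter]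
    exact count_fiber R R' S hS i
  simp_rw [hinner]
  rw [Finset.sum_const, Finset.card_univ, smul_eq_mul]
  congr 1
  rw [Fintype.card_fun, Fintype.card_fin, Fintype.card_coe]

end AuxLemmas

/-- `Cov(ρ_n, ρ'_n) = Σ_{r=1}^{m} ((n−1)^{m−r}/n^m) Σ_{S ⊆ R∩R', |S|=r} Cov_S(ρ, ρ')`. -/
theorem stmt4 {I : Type} [Fintype I] [DecidableEq I]
    (n : ℕ) (hn : 1 ≤ n) (m : I → ℕ) (hm : ∀ j, 1 ≤ m j) (R R' : Finset I)
    (hK : 1 ≤ R.card) (hK' : 1 ≤ R'.card) (hm1 : 1 ≤ (R ∩ R').card)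
    (ρB : Blk m R → ℝ) (ρB' : Blk m R' → ℝ) :
    cov (unif n m (R ∪ R'))
        (est n m R Finset.subset_union_left ρB)
        (est n m R' Finset.subset_union_right ρB')
      = ∑ r ∈ Finset.Icc 1 (R ∩ R').card,
          (((n : ℝ) - 1) ^ ((R ∩ R').card - r) / (n : ℝ) ^ (R ∩ R').card) *
            ∑ S ∈ (R ∩ R').powerset.filter (fun S => S.card = r),
              covS m R R' ρB ρB' S := by
  classical
  have hn0 : (0:ℝ) < (n:ℝ) := by exact_mod_cast hn
  have hmK' : (R ∩ R').card ≤ R'.card := Finset.card_le_card Finset.inter_subset_right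
  -- Step 1: covariance as finite sums
  rw [cov_unif n m hm (R ∪ R')]
  -- Step 2: the means are the block means
  have hmean : ∀ (T : Finset I) (hTU : T ⊆ R ∪ R') (f : Blk m T → ℝ),
      (Fintype.card (Samp n m (R ∪ R')) : ℝ)⁻¹ * ∑ ω, est n m T hTU f ω
        = blkMean m T f := by
    intro T hTU f
    have h1 : ∑ ω : Samp n m (R ∪ R'), est n m T hTU f ω
        = ((n:ℝ) ^ T.card)⁻¹ * ∑ i : {j // j ∈ T} → Fin n,
            ∑ ω : Samp n m (R ∪ R'), f (fun j => ω ⟨j, hTU j.2⟩ (i j)) := by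
      simp_rw [est]
      rw [← Finset.mul_sum]
      congr 1
      exact Finset.sum_comm
    rw [h1, mul_left_comm, Finset.mul_sum]
    rw [Finset.sum_congr rfl (fun i _ => single_expect n m hm T hTU f i),
      Finset.sum_const, Finset.card_univ, nsmul_eq_mul, Fintype.card_fun,
      Fintype.card_fin, Fintype.card_coe]
    push_cast
    rw [← mul_assoc, inv_mul_cancel₀ (by positivity : ((n:ℝ) ^ T.card) ≠ 0), one_mul]
  rw [hmean R Finset.subset_union_left ρB, hmean R' Finset.subset_union_right ρB']
  -- Step 3: second moment via pair_expect
  have h1 : ∀ ω : Samp n m (R ∪ R'),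
      est n m R Finset.subset_union_left ρB ω * est n m R' Finset.subset_union_right ρB' ω
      = ((n:ℝ) ^ R.card)⁻¹ * (((n:ℝ) ^ R'.card)⁻¹ *
          ∑ i : {j // j ∈ R} → Fin n, ∑ i' : {j // j ∈ R'} → Fin n,
            (ρB fun j => ω ⟨j, Finset.subset_union_left j.2⟩ (i j)) *
            (ρB' fun j => ω ⟨j, Finset.subset_union_right j.2⟩ (i' j))) := by
    intro ω
    rw [est, est, ← Finset.sum_mul_sum]
    ring
  have h2 : ∑ ω : Samp n m (R ∪ R'),
      est n m R Finset.subset_union_left ρB ω * est n m R' Finset.subset_union_right ρB' ω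
      = ((n:ℝ) ^ R.card)⁻¹ * (((n:ℝ) ^ R'.card)⁻¹ *
          ∑ i : {j // j ∈ R} → Fin n, ∑ i' : {j // j ∈ R'} → Fin n,
            ∑ ω : Samp n m (R ∪ R'),
              (ρB fun j => ω ⟨j, Finset.subset_union_left j.2⟩ (i j)) *
              (ρB' fun j => ω ⟨j, Finset.subset_union_right j.2⟩ (i' j))) := by
    simp_rw [h1]
    rw [← Finset.mul_sum, ← Finset.mul_sum]
    congr 2
    rw [Finset.sum_comm]
    exact Finset.sum_congr rfl (fun i _ => Finset.sum_comm)
  have h3 : (Fintype.card (Samp n m (R ∪ R')) : ℝ)⁻¹ *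
      ∑ ω : Samp n m (R ∪ R'),
        est n m R Finset.subset_union_left ρB ω * est n m R' Finset.subset_union_right ρB' ω
      = ((n:ℝ) ^ R.card)⁻¹ * (((n:ℝ) ^ R'.card)⁻¹ *
          ∑ i : {j // j ∈ R} → Fin n, ∑ i' : {j // j ∈ R'} → Fin n,
            (Fintype.card (Blk m (pairS R R' i i')) : ℝ)⁻¹ *
              ∑ l, rhoS m R ρB (pairS R R' i i') l * rhoS m R' ρB' (pairS R R' i i') l) := by
    rw [h2]
    rw [mul_left_comm ((Fintype.card (Samp n m (R ∪ R')) : ℝ)⁻¹) (((n:ℝ) ^ R.card)⁻¹)]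
    congr 1
    rw [mul_left_comm ((Fintype.card (Samp n m (R ∪ R')) : ℝ)⁻¹) (((n:ℝ) ^ R'.card)⁻¹)]
    congr 1
    rw [Finset.mul_sum]
    refine Finset.sum_congr rfl (fun i _ => ?_)
    rw [Finset.mul_sum]
    exact Finset.sum_congr rfl (fun i' _ => pair_expect n m hm R R' ρB ρB' i i')
  rw [h3]
  -- Step 4: replace the inner average by covS + mean product
  have h4 : ∀ (i : {j // j ∈ R} → Fin n) (i' : {j // j ∈ R'} → Fin n),
      (Fintype.card (Blk m (pairS R R' i i')) : ℝ)⁻¹ *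
          ∑ l, rhoS m R ρB (pairS R R' i i') l * rhoS m R' ρB' (pairS R R' i i') l
        = covS m R R' ρB ρB' (pairS R R' i i') + blkMean m R ρB * blkMean m R' ρB' := by
    intro i i'
    rw [covS_eq m hm R R' ρB ρB' (pairS_subset R R' i i')]
    ring
  simp_rw [h4, Finset.sum_add_distrib, Finset.sum_const, Finset.card_univ, nsmul_eq_mul]
  rw [Fintype.card_fun, Fintype.card_fin, Fintype.card_coe, Fintype.card_fun,
    Fintype.card_fin, Fintype.card_coe]
  -- cancel the mean product
  have h5 : ∀ A : ℝ,
      ((n:ℝ) ^ R.card)⁻¹ * (((n:ℝ) ^ R'.card)⁻¹ *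
          (A + (↑(n ^ R.card) : ℝ) * ((↑(n ^ R'.card) : ℝ) *
            (blkMean m R ρB * blkMean m R' ρB'))))
        - blkMean m R ρB * blkMean m R' ρB'
      = ((n:ℝ) ^ R.card)⁻¹ * (((n:ℝ) ^ R'.card)⁻¹ * A) := by
    intro A
    push_cast
    field_simp
    ring
  rw [h5]
  -- Step 5: group the pairs by their coincidence set
  have h6 : (∑ p : ({j // j ∈ R} → Fin n) × ({j // j ∈ R'} → Fin n),
      covS m R R' ρB ρB' (pairS R R' p.1 p.2))
      = ∑ x : {j // j ∈ R} → Fin n, ∑ x' : {j // j ∈ R'} → Fin n,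
          covS m R R' ρB ρB' (pairS R R' x x') := Fintype.sum_prod_type _
  rw [← h6]
  have h7 : ∑ p : ({j // j ∈ R} → Fin n) × ({j // j ∈ R'} → Fin n),
      covS m R R' ρB ρB' (pairS R R' p.1 p.2)
      = ∑ S ∈ (R ∩ R').powerset, ∑ p ∈ Finset.univ.filter
          (fun p : ({j // j ∈ R} → Fin n) × ({j // j ∈ R'} → Fin n) =>
            pairS R R' p.1 p.2 = S),
          covS m R R' ρB ρB' (pairS R R' p.1 p.2) :=
    (Finset.sum_fiberwise_of_maps_to
      (fun p _ => Finset.mem_powerset.2 (pairS_subset R R' p.1 p.2)) _).symm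
  rw [h7]
  have h8 : ∀ S ∈ (R ∩ R').powerset,
      (∑ p ∈ Finset.univ.filter
          (fun p : ({j // j ∈ R} → Fin n) × ({j // j ∈ R'} → Fin n) =>
            pairS R R' p.1 p.2 = S),
          covS m R R' ρB ρB' (pairS R R' p.1 p.2))
      = (↑(n ^ R.card * ((n - 1) ^ ((R ∩ R').card - S.card)
            * n ^ (R'.card - (R ∩ R').card))) : ℝ) * covS m R R' ρB ρB' S := by
    intro S hS
    rw [Finset.sum_congr rfl (fun p hp => by rw [(Finset.mem_filter.1 hp).2]),
      Finset.sum_const, nsmul_eq_mul, count_pairs R R' S (Finset.mem_powerset.1 hS)]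
  rw [Finset.sum_congr rfl h8, Finset.mul_sum, Finset.mul_sum]
  have hne : (n:ℝ) ≠ 0 := hn0.ne'
  have h9 : ∀ S ∈ (R ∩ R').powerset,
      ((n:ℝ) ^ R.card)⁻¹ * (((n:ℝ) ^ R'.card)⁻¹ *
        ((↑(n ^ R.card * ((n - 1) ^ ((R ∩ R').card - S.card)
            * n ^ (R'.card - (R ∩ R').card))) : ℝ) * covS m R R' ρB ρB' S))
      = (((n:ℝ) - 1) ^ ((R ∩ R').card - S.card) / (n:ℝ) ^ (R ∩ R').card)
          * covS m R R' ρB ρB' S := by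
    intro S hS
    have hpow : (n:ℝ) ^ (R'.card - (R ∩ R').card) * (n:ℝ) ^ (R ∩ R').card
        = (n:ℝ) ^ R'.card := pow_sub_mul_pow _ hmK'
    rw [Nat.cast_mul, Nat.cast_mul, Nat.cast_pow, Nat.cast_pow, Nat.cast_pow,
      Nat.cast_sub hn, Nat.cast_one]
    rw [← hpow]
    field_simp
  rw [Finset.sum_congr rfl h9]
  -- Step 6: regroup by cardinality
  have h10 : ∑ S ∈ (R ∩ R').powerset,
      (((n:ℝ) - 1) ^ ((R ∩ R').card - S.card) / (n:ℝ) ^ (R ∩ R').card)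
        * covS m R R' ρB ρB' S
      = ∑ r ∈ Finset.Icc 0 (R ∩ R').card,
          ∑ S ∈ (R ∩ R').powerset.filter (fun S => S.card = r),
            (((n:ℝ) - 1) ^ ((R ∩ R').card - S.card) / (n:ℝ) ^ (R ∩ R').card)
              * covS m R R' ρB ρB' S :=
    (Finset.sum_fiberwise_of_maps_to (fun S hS => Finset.mem_Icc.2
      ⟨Nat.zero_le _, Finset.card_le_card (Finset.mem_powerset.1 hS)⟩) _).symm
  rw [h10]
  have hIcc : Finset.Icc 0 (R ∩ R').card = insert 0 (Finset.Icc 1 (R ∩ R').card) := by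
    ext r
    simp only [Finset.mem_Icc, Finset.mem_insert]
    omega
  rw [hIcc, Finset.sum_insert (by simp)]
  have hzero : (∑ S ∈ (R ∩ R').powerset.filter (fun S => S.card = 0),
      (((n:ℝ) - 1) ^ ((R ∩ R').card - S.card) / (n:ℝ) ^ (R ∩ R').card)
        * covS m R R' ρB ρB' S) = 0 := by
    apply Finset.sum_eq_zero
    intro S hS
    have h0 : S = ∅ := Finset.card_eq_zero.1 (Finset.mem_filter.1 hS).2
    rw [h0, covS_empty, mul_zero]
  rw [hzero, zero_add]
  refine Finset.sum_congr rfl (fun r hr => ?_)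
  rw [Finset.mul_sum]
  refine Finset.sum_congr rfl (fun S hS => ?_)
  rw [(Finset.mem_filter.1 hS).2]


end
end

section
/- Assume in addition that ρ_B and ρ'_B take values in {0,1} (tuple-level partitioning). Then √(S_ρ²(m,n) · S_{ρ'}²(m,n)) ≤ (1 − (1 − 1/n)^m) · √(ρ(1 − ρ)) · √(ρ'(1 − ρ')), where S_ρ²(m,n) = Σ_{r=1}^{m} (1 − 1/n)^{m−r} (1/n)^r Σ_{S ⊆ R∩R', |S| = r} σ_S² and S_{ρ'}²(m,n) is defined analogously with (σ'_S)² in place of σ_S². -/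
open MeasureTheory ProbabilityTheory Finset

noncomputable section

variable {I : Type} [Fintype I] [DecidableEq I]

/-- `S_ρ²(m,n) = Σ_{r=1}^{m} (1 − 1/n)^{m−r} (1/n)^r Σ_{S ⊆ M, |S| = r} σ_S²`,
where `M = R ∩ R'` in the application below. -/
def Ssq (n : ℕ) (m : I → ℕ) (T : Finset I) (ρB : Blk m T → ℝ) (M : Finset I) : ℝ :=
  ∑ r ∈ Finset.Icc 1 M.card,
    (1 - (n : ℝ)⁻¹) ^ (M.card - r) * ((n : ℝ)⁻¹) ^ r *
      ∑ S ∈ M.powerset.filter (fun S => S.card = r), sigmaSq m T ρB S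

namespace Aux13

lemma card_blk (m : I → ℕ) (T : Finset I) :
    Fintype.card (Blk m T) = ∏ j ∈ T, m j := by
  show Fintype.card (∀ j : T, Fin (m j)) = _
  rw [Fintype.card_pi]
  simp only [Fintype.card_fin]
  exact Finset.prod_attach T m

lemma card_blk_pos (m : I → ℕ) (hm : ∀ j, 1 ≤ m j) (T : Finset I) :
    0 < Fintype.card (Blk m T) := by
  rw [card_blk]; exact Finset.prod_pos (fun j _ => hm j)

lemma fiber_card (m : I → ℕ) (T S : Finset I) (hST : S ⊆ T) (l : Blk m S) :
    (Finset.univ.filter (Agrees m T S l)).card = Fintype.card (Blk m (T \ S)) := by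
  rw [← Finset.card_univ]
  apply Finset.card_bij'
    (fun b _ => (fun j => b ⟨j.1, (Finset.mem_sdiff.mp j.2).1⟩ : Blk m (T \ S)))
    (fun c _ => (fun j => if h : j.1 ∈ S then l ⟨j.1, h⟩
        else c ⟨j.1, Finset.mem_sdiff.mpr ⟨j.2, h⟩⟩ : Blk m T))
  · intro b hb; exact Finset.mem_univ _
  · intro c hc
    refine (Finset.mem_filter (p := Agrees m T S l)).mpr ⟨Finset.mem_univ _, ?_⟩
    intro j hjS hjT
    exact dif_pos hjS
  · intro b hb
    replace hb := ((Finset.mem_filter (p := Agrees m T S l)).mp hb).2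
    funext j
    by_cases h : j.1 ∈ S
    · simpa [h] using (hb j.1 h j.2).symm
    · simp [h]
  · intro c hc
    funext j
    have h : j.1 ∉ S := (Finset.mem_sdiff.mp j.2).2
    simp [h]

lemma agrees_iff (m : I → ℕ) (T S : Finset I) (hST : S ⊆ T) (l : Blk m S) (b : Blk m T) :
    Agrees m T S l b ↔ (fun j : S => b ⟨j.1, hST j.2⟩) = l := by
  constructor
  · intro h; funext j; exact h j.1 j.2 (hST j.2)
  · intro h j hjS hjT
    have := congrFun h ⟨j, hjS⟩
    simpa using this

lemma sum_fiber (m : I → ℕ) (T S : Finset I) (hST : S ⊆ T) (f : Blk m T → ℝ) :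
    ∑ l : Blk m S, ∑ b ∈ Finset.univ.filter (Agrees m T S l), f b = ∑ b, f b := by
  have h : ∀ l : Blk m S, Finset.univ.filter (Agrees m T S l)
      = @Finset.filter _ (fun b : Blk m T => @Eq (Blk m S) (fun j : S => b ⟨j.1, hST j.2⟩) l) (fun b => instDecidableEqBlk m S _ l) Finset.univ := by
    intro l; ext b
    simp only [Finset.mem_filter, Finset.mem_univ, true_and]
    exact agrees_iff m T S hST l b
  simp_rw [h]
  exact Finset.sum_fiberwise _ _ _

lemma card_blk_mul (m : I → ℕ) (T S : Finset I) (hST : S ⊆ T) :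
    Fintype.card (Blk m T) = Fintype.card (Blk m (T \ S)) * Fintype.card (Blk m S) := by
  rw [card_blk, card_blk, card_blk, Finset.prod_sdiff hST]

lemma avg_rhoS (m : I → ℕ) (T S : Finset I) (hST : S ⊆ T) (ρB : Blk m T → ℝ) :
    (Fintype.card (Blk m S) : ℝ)⁻¹ * ∑ l : Blk m S, rhoS m T ρB S l = blkMean m T ρB := by
  unfold rhoS blkMean
  have hc : ∀ l : Blk m S, ((Finset.univ.filter (Agrees m T S l)).card : ℝ)
      = (Fintype.card (Blk m (T \ S)) : ℝ) := fun l => by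
    exact_mod_cast congrArg (fun k : ℕ => (k : ℝ)) (fiber_card m T S hST l)
  calc (Fintype.card (Blk m S) : ℝ)⁻¹ * ∑ l : Blk m S,
        ((Finset.univ.filter (Agrees m T S l)).card : ℝ)⁻¹ *
          ∑ b ∈ Finset.univ.filter (Agrees m T S l), ρB b
      = (Fintype.card (Blk m S) : ℝ)⁻¹ * ((Fintype.card (Blk m (T \ S)) : ℝ)⁻¹ *
          ∑ l : Blk m S, ∑ b ∈ Finset.univ.filter (Agrees m T S l), ρB b) := by
        congr 1
        rw [Finset.mul_sum]
        exact Finset.sum_congr rfl fun l _ => by rw [hc l]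
    _ = (Fintype.card (Blk m T) : ℝ)⁻¹ * ∑ b, ρB b := by
        rw [sum_fiber m T S hST, card_blk_mul m T S hST]
        push_cast
        rw [mul_inv]
        ring

lemma rhoS_nonneg (m : I → ℕ) (T S : Finset I) (ρB : Blk m T → ℝ)
    (h0 : ∀ b, 0 ≤ ρB b) (l : Blk m S) : 0 ≤ rhoS m T ρB S l := by
  unfold rhoS
  exact mul_nonneg (by positivity) (Finset.sum_nonneg fun b _ => h0 b)

lemma rhoS_le_one (m : I → ℕ) (T S : Finset I) (ρB : Blk m T → ℝ)
    (h1 : ∀ b, ρB b ≤ 1) (l : Blk m S) : rhoS m T ρB S l ≤ 1 := by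
  unfold rhoS
  rcases Nat.eq_zero_or_pos (Finset.univ.filter (Agrees m T S l)).card with h | h
  · simp [h]
  · have hc : (0:ℝ) < ((Finset.univ.filter (Agrees m T S l)).card : ℝ) := by exact_mod_cast h
    rw [inv_mul_le_iff₀ hc, mul_one]
    calc ∑ b ∈ Finset.univ.filter (Agrees m T S l), ρB b
        ≤ ∑ b ∈ Finset.univ.filter (Agrees m T S l), 1 := Finset.sum_le_sum fun b _ => h1 b
      _ = _ := by simp

lemma blkMean_nonneg (m : I → ℕ) (T : Finset I) (ρB : Blk m T → ℝ)
    (h0 : ∀ b, 0 ≤ ρB b) : 0 ≤ blkMean m T ρB :=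
  mul_nonneg (by positivity) (Finset.sum_nonneg fun b _ => h0 b)

lemma blkMean_le_one (m : I → ℕ) (hm : ∀ j, 1 ≤ m j) (T : Finset I) (ρB : Blk m T → ℝ)
    (h1 : ∀ b, ρB b ≤ 1) : blkMean m T ρB ≤ 1 := by
  unfold blkMean
  have hc : (0:ℝ) < (Fintype.card (Blk m T) : ℝ) := by
    exact_mod_cast card_blk_pos m hm T
  rw [inv_mul_le_iff₀ hc, mul_one]
  calc ∑ b, ρB b ≤ ∑ _b : Blk m T, (1:ℝ) := Finset.sum_le_sum fun b _ => h1 b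
    _ = _ := by simp

lemma sigmaSq_nonneg (m : I → ℕ) (T : Finset I) (ρB : Blk m T → ℝ) (S : Finset I) :
    0 ≤ sigmaSq m T ρB S := by
  unfold sigmaSq
  exact mul_nonneg (by positivity) (Finset.sum_nonneg fun l _ => sq_nonneg _)

lemma sigmaSq_le (m : I → ℕ) (hm : ∀ j, 1 ≤ m j) (T S : Finset I) (hST : S ⊆ T)
    (ρB : Blk m T → ℝ) (hbin : ∀ b, ρB b = 0 ∨ ρB b = 1) :
    sigmaSq m T ρB S ≤ blkMean m T ρB * (1 - blkMean m T ρB) := by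
  have h0 : ∀ b, 0 ≤ ρB b := fun b => by rcases hbin b with h | h <;> simp [h]
  have h1 : ∀ b, ρB b ≤ 1 := fun b => by rcases hbin b with h | h <;> simp [h]
  set ρ := blkMean m T ρB with hρ
  have hN : (0:ℝ) < (Fintype.card (Blk m S) : ℝ) := by
    exact_mod_cast card_blk_pos m hm S
  set N := (Fintype.card (Blk m S) : ℝ) with hNdef
  have hNne : N ≠ 0 := ne_of_gt hN
  set x := fun l : Blk m S => rhoS m T ρB S l with hx
  have havg : N⁻¹ * ∑ l : Blk m S, x l = ρ := avg_rhoS m T S hST ρB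
  have e1 : ∑ l : Blk m S, (x l - ρ) ^ 2
      = (∑ l : Blk m S, x l ^ 2) - 2 * ρ * (∑ l : Blk m S, x l) + N * ρ ^ 2 := by
    have : ∀ l : Blk m S, (x l - ρ) ^ 2 = x l ^ 2 - 2 * ρ * x l + ρ ^ 2 := by
      intro l; ring
    rw [Finset.sum_congr rfl (fun l _ => this l), Finset.sum_add_distrib,
      Finset.sum_sub_distrib, ← Finset.mul_sum, Finset.sum_const, Finset.card_univ]
    rw [hNdef]
    ring
  have hsum : ∑ l : Blk m S, x l = N * ρ := by
    rw [← havg, ← mul_assoc, mul_inv_cancel₀ hNne, one_mul]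
  have e2 : sigmaSq m T ρB S = N⁻¹ * (∑ l : Blk m S, x l ^ 2) - ρ ^ 2 := by
    show N⁻¹ * ∑ l : Blk m S, (x l - ρ) ^ 2 = _
    rw [e1, hsum]
    field_simp
    ring
  have e3 : ∑ l : Blk m S, x l ^ 2 ≤ ∑ l : Blk m S, x l := by
    apply Finset.sum_le_sum
    intro l _
    have hx0 : 0 ≤ x l := rhoS_nonneg m T S ρB h0 l
    have hx1 : x l ≤ 1 := rhoS_le_one m T S ρB h1 l
    nlinarith
  calc sigmaSq m T ρB S = N⁻¹ * (∑ l : Blk m S, x l ^ 2) - ρ ^ 2 := e2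
    _ ≤ N⁻¹ * (∑ l : Blk m S, x l) - ρ ^ 2 := by
        have := mul_le_mul_of_nonneg_left e3 (le_of_lt (inv_pos.mpr hN))
        linarith
    _ = ρ - ρ ^ 2 := by rw [havg]
    _ = ρ * (1 - ρ) := by ring

lemma binom_sum (p : ℝ) (hp0 : 0 ≤ p) (hp1 : p ≤ 1) (M : ℕ) :
    ∑ r ∈ Finset.Icc 1 M, (1 - p) ^ (M - r) * p ^ r * ((M.choose r : ℝ))
      = 1 - (1 - p) ^ M := by
  have key : ∑ r ∈ Finset.range (M + 1), p ^ r * (1 - p) ^ (M - r) * ((M.choose r : ℝ)) = 1 := by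
    have := add_pow p (1 - p) M
    simp only [add_sub_cancel, one_pow] at this
    exact this.symm
  have hins : Finset.range (M + 1) = insert 0 (Finset.Icc 1 M) := by
    ext r
    simp only [Finset.mem_range, Finset.mem_insert, Finset.mem_Icc]
    omega
  rw [hins, Finset.sum_insert (by simp)] at key
  simp only [pow_zero, Nat.sub_zero, Nat.choose_zero_right, Nat.cast_one, one_mul, mul_one] at key
  have : ∑ r ∈ Finset.Icc 1 M, (1 - p) ^ (M - r) * p ^ r * ((M.choose r : ℝ))
      = ∑ r ∈ Finset.Icc 1 M, p ^ r * (1 - p) ^ (M - r) * ((M.choose r : ℝ)) := by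
    apply Finset.sum_congr rfl; intro r _; ring
  rw [this]
  linarith

lemma ssq_nonneg (n : ℕ) (hn : 1 ≤ n) (m : I → ℕ) (T : Finset I) (ρB : Blk m T → ℝ)
    (M : Finset I) : 0 ≤ Ssq n m T ρB M := by
  have hp0 : (0:ℝ) ≤ (n : ℝ)⁻¹ := by positivity
  have hp1 : (n : ℝ)⁻¹ ≤ 1 := by
    rw [inv_le_one_iff₀]; right; exact_mod_cast hn
  unfold Ssq
  apply Finset.sum_nonneg
  intro r _
  apply mul_nonneg (mul_nonneg (pow_nonneg (by linarith) _) (pow_nonneg hp0 _))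
  exact Finset.sum_nonneg fun S _ => sigmaSq_nonneg m T ρB S

lemma ssq_le (n : ℕ) (hn : 1 ≤ n) (m : I → ℕ) (hm : ∀ j, 1 ≤ m j)
    (T M : Finset I) (hMT : M ⊆ T) (ρB : Blk m T → ℝ)
    (hbin : ∀ b, ρB b = 0 ∨ ρB b = 1) :
    Ssq n m T ρB M ≤ (1 - (1 - (n : ℝ)⁻¹) ^ M.card) *
      (blkMean m T ρB * (1 - blkMean m T ρB)) := by
  have h0 : ∀ b, 0 ≤ ρB b := fun b => by rcases hbin b with h | h <;> simp [h]
  have h1 : ∀ b, ρB b ≤ 1 := fun b => by rcases hbin b with h | h <;> simp [h]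
  set p := ((n : ℝ))⁻¹ with hp
  have hp0 : (0:ℝ) ≤ p := by positivity
  have hp1 : p ≤ 1 := by
    rw [hp, inv_le_one_iff₀]; right; exact_mod_cast hn
  set v := blkMean m T ρB * (1 - blkMean m T ρB) with hv
  have hv0 : 0 ≤ v := mul_nonneg (blkMean_nonneg m T ρB h0)
    (by linarith [blkMean_le_one m hm T ρB h1])
  have step1 : Ssq n m T ρB M ≤ ∑ r ∈ Finset.Icc 1 M.card,
      (1 - p) ^ (M.card - r) * p ^ r * ((M.card.choose r : ℝ)) * v := by
    unfold Ssq
    apply Finset.sum_le_sum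
    intro r _
    rw [mul_assoc ((1-p)^(M.card - r) * p^r)]
    apply mul_le_mul_of_nonneg_left _ (mul_nonneg (pow_nonneg (by linarith) _) (pow_nonneg hp0 _))
    have hfilter : ∑ S ∈ M.powerset.filter (fun S => S.card = r), sigmaSq m T ρB S
        ≤ ∑ S ∈ M.powerset.filter (fun S => S.card = r), v := by
      apply Finset.sum_le_sum
      intro S hS
      have hSM : S ⊆ M := Finset.mem_powerset.mp (Finset.mem_filter.mp hS).1
      exact sigmaSq_le m hm T S (hSM.trans hMT) ρB hbin
    calc ∑ S ∈ M.powerset.filter (fun S => S.card = r), sigmaSq m T ρB S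
        ≤ ∑ S ∈ M.powerset.filter (fun S => S.card = r), v := hfilter
      _ = ((M.card.choose r : ℝ)) * v := by
          rw [Finset.sum_const, ← Finset.powersetCard_eq_filter, Finset.card_powersetCard]
          simp [nsmul_eq_mul]
  calc Ssq n m T ρB M
      ≤ ∑ r ∈ Finset.Icc 1 M.card,
        (1 - p) ^ (M.card - r) * p ^ r * ((M.card.choose r : ℝ)) * v := step1
    _ = (∑ r ∈ Finset.Icc 1 M.card,
        (1 - p) ^ (M.card - r) * p ^ r * ((M.card.choose r : ℝ))) * v := by
          rw [Finset.sum_mul]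
    _ = (1 - (1 - p) ^ M.card) * v := by rw [binom_sum p hp0 hp1 M.card]

end Aux13

/-- under tuple-level partitioning,
`√(S_ρ²(m,n) · S_{ρ'}²(m,n)) ≤ (1 − (1 − 1/n)^m) · √(ρ(1 − ρ)) · √(ρ'(1 − ρ'))`. -/
theorem stmt13 {I : Type} [Fintype I] [DecidableEq I]
    (n : ℕ) (hn : 1 ≤ n) (m : I → ℕ) (hm : ∀ j, 1 ≤ m j) (R R' : Finset I)
    (hK : 1 ≤ R.card) (hK' : 1 ≤ R'.card) (hm1 : 1 ≤ (R ∩ R').card)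
    (ρB : Blk m R → ℝ) (ρB' : Blk m R' → ℝ)
    (hbin : ∀ b, ρB b = 0 ∨ ρB b = 1) (hbin' : ∀ b, ρB' b = 0 ∨ ρB' b = 1) :
    Real.sqrt (Ssq n m R ρB (R ∩ R') * Ssq n m R' ρB' (R ∩ R'))
      ≤ (1 - (1 - (n : ℝ)⁻¹) ^ (R ∩ R').card) *
          Real.sqrt (blkMean m R ρB * (1 - blkMean m R ρB)) *
          Real.sqrt (blkMean m R' ρB' * (1 - blkMean m R' ρB')) := by
  have h0 : ∀ b, 0 ≤ ρB b := fun b => by rcases hbin b with h | h <;> simp [h]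
  have h1 : ∀ b, ρB b ≤ 1 := fun b => by rcases hbin b with h | h <;> simp [h]
  have h0' : ∀ b, 0 ≤ ρB' b := fun b => by rcases hbin' b with h | h <;> simp [h]
  have h1' : ∀ b, ρB' b ≤ 1 := fun b => by rcases hbin' b with h | h <;> simp [h]
  set p := ((n : ℝ))⁻¹ with hp
  have hp0 : (0:ℝ) ≤ p := by positivity
  have hp1 : p ≤ 1 := by
    rw [hp, inv_le_one_iff₀]; right; exact_mod_cast hn
  set c := 1 - (1 - p) ^ (R ∩ R').card with hc
  have hc0 : 0 ≤ c := by
    have : (1 - p) ^ (R ∩ R').card ≤ 1 :=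
      pow_le_one₀ (by linarith) (by linarith)
    simp only [hc]; linarith
  set v := blkMean m R ρB * (1 - blkMean m R ρB) with hv
  set v' := blkMean m R' ρB' * (1 - blkMean m R' ρB') with hv'
  have hv0 : 0 ≤ v := mul_nonneg (Aux13.blkMean_nonneg m R ρB h0)
    (by linarith [Aux13.blkMean_le_one m hm R ρB h1])
  have hv0' : 0 ≤ v' := mul_nonneg (Aux13.blkMean_nonneg m R' ρB' h0')
    (by linarith [Aux13.blkMean_le_one m hm R' ρB' h1'])
  have hA : Ssq n m R ρB (R ∩ R') ≤ c * v :=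
    Aux13.ssq_le n hn m hm R (R ∩ R') Finset.inter_subset_left ρB hbin
  have hA' : Ssq n m R' ρB' (R ∩ R') ≤ c * v' :=
    Aux13.ssq_le n hn m hm R' (R ∩ R') Finset.inter_subset_right ρB' hbin'
  have hA0 : 0 ≤ Ssq n m R ρB (R ∩ R') := Aux13.ssq_nonneg n hn m R ρB (R ∩ R')
  have hA0' : 0 ≤ Ssq n m R' ρB' (R ∩ R') := Aux13.ssq_nonneg n hn m R' ρB' (R ∩ R')
  calc Real.sqrt (Ssq n m R ρB (R ∩ R') * Ssq n m R' ρB' (R ∩ R'))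
      ≤ Real.sqrt ((c * v) * (c * v')) := by
        apply Real.sqrt_le_sqrt
        exact mul_le_mul hA hA' hA0' (mul_nonneg hc0 hv0)
    _ = c * Real.sqrt v * Real.sqrt v' := by
        rw [show (c * v) * (c * v') = c ^ 2 * (v * v') by ring,
          Real.sqrt_mul (by positivity), Real.sqrt_sq hc0,
          Real.sqrt_mul hv0]
        ring

end
end
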